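/- Let I,J ⊆ ℝ be open intervals and σ, σ̂ : I → ℝ^6 smooth with ⟨σ,σ⟩ = ⟨σ̂,σ̂⟩ = 0, ⟨σ(t),σ̂(t)⟩ ≠ 0, ⟨σ'(t),σ'(t)⟩ > 0 and ⟨σ̂'(t),σ̂'(t)⟩ > 0 for all t (two regular sphere curves never spanning a contact element). Suppose span{σ(t),σ'(t),σ̂(t)} = span{σ̂(t),σ̂'(t),σ(t)} =: V(t) for all t. Let σ₀ : I×J → ℝ^6 be smooth, nowhere zero, with ⟨σ₀,σ₀⟩ = 0, σ₀(t,θ) ⊥ V(t), and ∂_θσ₀(t,θ) ∉ span{σ₀(t,θ)} at every point. Extend σ, σ̂ constantly in θ. Then f := span{σ₀,σ} and f̂ := span{σ₀,σ̂} are Legendre maps (totally isotropic 2-planes satisfying the contact and immersion conditions) enveloping the common sphere congruence span{σ₀}; σ (resp. σ̂) spans a curvature sphere of f (resp. f̂) with curvature direction ∂_θ; and there exists a smooth function c : I×J → ℝ such that X := ∂_t + c∂_θ is the second curvature direction of both f and f̂, i.e., at every point the vectors ∂_Xσ, ∂_Xσ₀ are linearly dependent modulo f and the vectors ∂_Xσ̂,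 ∂_Xσ₀ are linearly dependent modulo f̂. Hence the envelopes of σ and σ̂ form a Ribaucour pair of channel surfaces with corresponding circular curvature directions. -/

import Mathlib

noncomputable section

/-- `ℝ^{4,2}`: `ℝ^6` with a bilinear form of signature (4,2). -/
abbrev V6 : Type := Fin 6 → ℝ

/-- The symmetric bilinear form of signature (4,2) on `ℝ^6`. -/
def form (x y : V6) : ℝ :=
  x 0 * y 0 + x 1 * y 1 + x 2 * y 2 + x 3 * y 3 - x 4 * y 4 - x 5 * y 5

/-- Partial derivative in the first (`u`) coordinate. -/
def pu (σ : ℝ × ℝ → V6) (p : ℝ × ℝ) : V6 := fderiv ℝ σ p (1, 0)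

/-- Partial derivative in the second (`v`) coordinate. -/
def pv (σ : ℝ × ℝ → V6) (p : ℝ × ℝ) : V6 := fderiv ℝ σ p (0, 1)

/-- The contact plane `f = span{σ₁, σ₂}`. -/
def spanF (σ₁ σ₂ : ℝ × ℝ → V6) (p : ℝ × ℝ) : Submodule ℝ V6 :=
  Submodule.span ℝ {σ₁ p, σ₂ p}

/-- A local umbilic-free Legendre map in curvature line coordinates `(u,v)` on `U`,
given by lifts `σ₁, σ₂` of the two curvature sphere congruences, with curvature
directions `T₁ = ∂_u` (for `s₁ = span{σ₁}`) and `T₂ = ∂_v` (for `s₂ = span{σ₂}`). -/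
structure IsLegendre (U : Set (ℝ × ℝ)) (σ₁ σ₂ : ℝ × ℝ → V6) : Prop where
  open_U : IsOpen U
  smooth₁ : ContDiffOn ℝ (⊤ : ℕ∞) σ₁ U
  smooth₂ : ContDiffOn ℝ (⊤ : ℕ∞) σ₂ U
  indep : ∀ p ∈ U, LinearIndependent ℝ ![σ₁ p, σ₂ p]
  iso₁₁ : ∀ p ∈ U, form (σ₁ p) (σ₁ p) = 0
  iso₁₂ : ∀ p ∈ U, form (σ₁ p) (σ₂ p) = 0
  iso₂₂ : ∀ p ∈ U, form (σ₂ p) (σ₂ p) = 0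
  contact_u : ∀ p ∈ U, form (pu σ₁ p) (σ₂ p) = 0
  contact_v : ∀ p ∈ U, form (pv σ₁ p) (σ₂ p) = 0
  curv₁ : ∀ p ∈ U, pu σ₁ p ∈ spanF σ₁ σ₂ p
  curv₂ : ∀ p ∈ U, pv σ₂ p ∈ spanF σ₁ σ₂ p
  umb₁ : ∀ p ∈ U, pv σ₁ p ∉ spanF σ₁ σ₂ p
  umb₂ : ∀ p ∈ U, pu σ₂ p ∉ spanF σ₁ σ₂ p

lemma form_comm (x y : V6) : form x y = form y x := by simp [form]; ring

lemma form_add_left (x y z : V6) : form (x + y) z = form x z + form y z := by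
  simp [form]; ring

lemma form_smul_left (a : ℝ) (x y : V6) : form (a • x) y = a * form x y := by
  simp [form]; ring

lemma form_add_right (x y z : V6) : form x (y + z) = form x y + form x z := by
  simp [form]; ring

lemma form_smul_right (a : ℝ) (x y : V6) : form x (a • y) = a * form x y := by
  simp [form]; ring

lemma form_zero_left (y : V6) : form 0 y = 0 := by simp [form]

lemma form_zero_right (x : V6) : form x 0 = 0 := by simp [form]

lemma form_flip_pos {x : V6} (hx : x ≠ 0) :
    0 < form x ![x 0, x 1, x 2, x 3, -x 4, -x 5] := by
  have h : form x ![x 0, x 1, x 2, x 3, -x 4, -x 5]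
      = x 0 ^ 2 + x 1 ^ 2 + x 2 ^ 2 + x 3 ^ 2 + x 4 ^ 2 + x 5 ^ 2 := by
    simp only [form, show (![x 0, x 1, x 2, x 3, -x 4, -x 5] 0) = x 0 from rfl,
      show (![x 0, x 1, x 2, x 3, -x 4, -x 5] 1) = x 1 from rfl,
      show (![x 0, x 1, x 2, x 3, -x 4, -x 5] 2) = x 2 from rfl,
      show (![x 0, x 1, x 2, x 3, -x 4, -x 5] 3) = x 3 from rfl,
      show (![x 0, x 1, x 2, x 3, -x 4, -x 5] 4) = -x 4 from rfl,
      show (![x 0, x 1, x 2, x 3, -x 4, -x 5] 5) = -x 5 from rfl]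
    ring
  rw [h]
  have hex : ∃ i, x i ≠ 0 := by rwa [Function.ne_iff] at hx
  rcases hex with ⟨i, hi⟩
  have hpos : (0:ℝ) < ∑ j : Fin 6, x j ^ 2 :=
    Finset.sum_pos' (fun j _ => sq_nonneg _) ⟨i, Finset.mem_univ i, sq_pos_of_ne_zero hi⟩
  rw [Fin.sum_univ_six] at hpos
  linarith

/-- Three vectors on which the form is negative semidefinite are linearly dependent. -/
lemma dependent_of_neg_semidef (u v w : V6)
    (h : ∀ a b c : ℝ, form (a • u + b • v + c • w) (a • u + b • v + c • w) ≤ 0) :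
    ∃ a b c : ℝ, ¬(a = 0 ∧ b = 0 ∧ c = 0) ∧ a • u + b • v + c • w = 0 := by
  have hni : ¬ LinearIndependent ℝ ![(fun i => ![u 4, u 5] i : Fin 2 → ℝ),
      fun i => ![v 4, v 5] i, fun i => ![w 4, w 5] i] := by
    intro hli
    have := hli.fintype_card_le_finrank
    simp [Module.finrank_fin_fun] at this
  rw [Fintype.not_linearIndependent_iff] at hni
  obtain ⟨g, hg, i0, hi0⟩ := hni
  refine ⟨g 0, g 1, g 2, ?_, ?_⟩
  · intro ⟨h0, h1, h2⟩
    fin_cases i0 <;> simp_all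
  · set x : V6 := g 0 • u + g 1 • v + g 2 • w with hxdef
    have hx4 : x 4 = 0 := by
      have := congrFun hg 0
      simp [Fin.sum_univ_three] at this
      simpa [hxdef] using this
    have hx5 : x 5 = 0 := by
      have := congrFun hg 1
      simp [Fin.sum_univ_three] at this
      simpa [hxdef] using this
    have hle : form x x ≤ 0 := h _ _ _
    have hform : form x x = x 0 ^ 2 + x 1 ^ 2 + x 2 ^ 2 + x 3 ^ 2 := by
      simp [form, hx4, hx5]; ring
    have h0 : ∀ i, x i = 0 := by
      intro i
      have h03 : x 0 = 0 ∧ x 1 = 0 ∧ x 2 = 0 ∧ x 3 = 0 := by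
        constructor
        on_goal 2 => constructor
        on_goal 3 => constructor
        all_goals nlinarith [sq_nonneg (x 0), sq_nonneg (x 1), sq_nonneg (x 2), sq_nonneg (x 3)]
      fin_cases i <;> simp_all
    exact funext h0

lemma form_sub_left (x y z : V6) : form (x - y) z = form x z - form y z := by
  simp [form]; ring

lemma form_sub_right (x y z : V6) : form x (y - z) = form x y - form x z := by
  simp [form]; ring

/-- In signature (4,2): a vector `P` orthogonal to a hyperbolic pair `S, T` and to a
null vector `S0 ⊥ S, T` and not proportional to `S0` has positive norm. -/
lemma pos_of_orth {S T S0 P : V6} (hS : form S S = 0) (hT : form T T = 0)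
    (hST : form S T ≠ 0) (hS0S : form S0 S = 0) (hS0T : form S0 T = 0)
    (h00 : form S0 S0 = 0) (hPS : form P S = 0) (hPT : form P T = 0)
    (hPS0 : form P S0 = 0) (hS0ne : S0 ≠ 0) (hP : P ∉ Submodule.span ℝ ({S0} : Set V6)) :
    0 < form P P := by
  by_contra hq
  push_neg at hq
  set s := form S T with hs
  set n : V6 := S - s • T with hn
  have hsq : 0 < s ^ 2 := sq_pos_of_ne_zero hST
  -- symmetric versions
  have hTS : form T S = s := by rw [form_comm]
  have hSS0 : form S S0 = 0 := by rw [form_comm]; exact hS0S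
  have hTS0 : form T S0 = 0 := by rw [form_comm]; exact hS0T
  have hSP : form S P = 0 := by rw [form_comm]; exact hPS
  have hTP : form T P = 0 := by rw [form_comm]; exact hPT
  have hS0P : form S0 P = 0 := by rw [form_comm]; exact hPS0
  obtain ⟨a, b, c, habc, h0⟩ := dependent_of_neg_semidef n S0 P (by
    intro a b c
    have hexp : form (a • n + b • S0 + c • P) (a • n + b • S0 + c • P)
        = a ^ 2 * (-2 * s ^ 2) + c ^ 2 * form P P := by
      simp only [hn, form_add_left, form_add_right, form_smul_left, form_smul_right,
        form_sub_left, form_sub_right, hS, hT, hTS, hSS0, hTS0, hSP, hTP,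
        hS0S, hS0T, h00, hS0P, hPS, hPT, hPS0]
      rw [← hs]
      ring
    rw [hexp]
    nlinarith [sq_nonneg a, sq_nonneg c])
  have hnT : form n T = s := by
    simp only [hn, form_sub_left, form_smul_left, hT]
    rw [← hs]; ring
  have ha : a = 0 := by
    have := congrArg (fun x => form x T) h0
    simp only [form_add_left, form_smul_left, hnT, hS0T, hPT, form_zero_left] at this
    have : a * s = 0 := by linarith
    rcases mul_eq_zero.mp this with h | h
    · exact h
    · exact absurd h hST
  rw [ha, zero_smul, zero_add] at h0
  by_cases hc : c = 0
  · rw [hc, zero_smul, add_zero] at h0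
    have hb : b ≠ 0 := by tauto
    exact hS0ne (by simpa [hb] using smul_eq_zero.mp h0)
  · apply hP
    rw [Submodule.mem_span_singleton]
    refine ⟨-b / c, smul_right_injective V6 hc ?_⟩
    show c • ((-b / c) • S0) = c • P
    rw [smul_smul]
    have hcc : c * (-b / c) = -b := by field_simp [mul_comm]
    rw [hcc]
    have h0' : c • P = (-b) • S0 := by
      rw [neg_smul, eq_neg_iff_add_eq_zero, add_comm]; exact h0
    exact h0'.symm

/-- In signature (4,2): if `S,T` is a hyperbolic pair, `E, P` are positive, `E, P, R`
are pairwise orthogonal and orthogonal to `S, T`, and `S0 ≠ 0` is orthogonal to all of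
`S, T, E, P, R` and to itself, then `R` must lie in the span of `S0`. -/
lemma mem_span_singleton_of_orth {S T E P R S0 : V6}
    (hS : form S S = 0) (hT : form T T = 0) (hST : form S T ≠ 0)
    (hE : 0 < form E E) (hP : 0 < form P P)
    (hES : form E S = 0) (hET : form E T = 0)
    (hPS : form P S = 0) (hPT : form P T = 0)
    (hRS : form R S = 0) (hRT : form R T = 0)
    (hEP : form E P = 0) (hER : form E R = 0) (hPR : form P R = 0)
    (h0S : form S0 S = 0) (h0T : form S0 T = 0) (h0E : form S0 E = 0)
    (h0P : form S0 P = 0) (h0R : form S0 R = 0) (h00 : form S0 S0 = 0)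
    (hS0ne : S0 ≠ 0) :
    R ∈ Submodule.span ℝ ({S0} : Set V6) := by
  set s := form S T with hs
  -- symmetric versions of the hypotheses
  have hTS : form T S = s := by rw [form_comm]
  have hSE : form S E = 0 := by rw [form_comm]; exact hES
  have hTE : form T E = 0 := by rw [form_comm]; exact hET
  have hSP : form S P = 0 := by rw [form_comm]; exact hPS
  have hTP : form T P = 0 := by rw [form_comm]; exact hPT
  have hSR : form S R = 0 := by rw [form_comm]; exact hRS
  have hTR : form T R = 0 := by rw [form_comm]; exact hRT
  have hPE : form P E = 0 := by rw [form_comm]; exact hEP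
  have hRE : form R E = 0 := by rw [form_comm]; exact hER
  have hRP : form R P = 0 := by rw [form_comm]; exact hPR
  have hS0 : form S S0 = 0 := by rw [form_comm]; exact h0S
  have hT0 : form T S0 = 0 := by rw [form_comm]; exact h0T
  have hE0 : form E S0 = 0 := by rw [form_comm]; exact h0E
  have hP0 : form P S0 = 0 := by rw [form_comm]; exact h0P
  have hR0 : form R S0 = 0 := by rw [form_comm]; exact h0R
  rcases le_or_gt (form R R) 0 with hRR | hRR
  · -- negative semidefinite case: use the triple (S - s•T, S0, R)
    set n : V6 := S - s • T with hn
    have hsq : 0 < s ^ 2 := sq_pos_of_ne_zero hST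
    obtain ⟨a, b, c, habc, h0⟩ := dependent_of_neg_semidef n S0 R (by
      intro a b c
      have hexp : form (a • n + b • S0 + c • R) (a • n + b • S0 + c • R)
          = a ^ 2 * (-2 * s ^ 2) + c ^ 2 * form R R := by
        simp only [hn, form_add_left, form_add_right, form_smul_left, form_smul_right,
          form_sub_left, form_sub_right, hS, hT, hTS, hS0, hT0, hSR, hTR,
          h0S, h0T, h00, h0R, hRS, hRT, hR0]
        rw [← hs]; ring
      rw [hexp]
      nlinarith [sq_nonneg a, sq_nonneg c])
    have hnT : form n T = s := by
      simp only [hn, form_sub_left, form_smul_left, hT]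
      rw [← hs]; ring
    have ha : a = 0 := by
      have := congrArg (fun x => form x T) h0
      simp only [form_add_left, form_smul_left, hnT, h0T, hRT, form_zero_left] at this
      have h' : a * s = 0 := by linarith
      rcases mul_eq_zero.mp h' with h | h
      · exact h
      · exact absurd h hST
    rw [ha, zero_smul, zero_add] at h0
    by_cases hc : c = 0
    · rw [hc, zero_smul, add_zero] at h0
      have hb : b ≠ 0 := by tauto
      exact absurd (by simpa [hb] using smul_eq_zero.mp h0) hS0ne
    · rw [Submodule.mem_span_singleton]
      refine ⟨-b / c, smul_right_injective V6 hc ?_⟩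
      show c • ((-b / c) • S0) = c • R
      rw [smul_smul]
      have hcc : c * (-b / c) = -b := by field_simp [mul_comm]
      rw [hcc]
      have h0' : c • R = (-b) • S0 := by
        rw [neg_smul, eq_neg_iff_add_eq_zero, add_comm]; exact h0
      exact h0'.symm
  · -- positive case is impossible: S,T,E,P,R,S0 would be a basis orthogonal to S0
    exfalso
    set v : Fin 6 → V6 := ![S, T, E, P, R, S0] with hv
    have hli : LinearIndependent ℝ v := by
      rw [Fintype.linearIndependent_iff]
      intro g hg
      have hsum : g 0 • S + g 1 • T + g 2 • E + g 3 • P + g 4 • R + g 5 • S0 = 0 := by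
        have := hg
        rwa [Fin.sum_univ_six] at this
      have pair : ∀ X : V6, form (g 0 • S + g 1 • T + g 2 • E + g 3 • P + g 4 • R + g 5 • S0) X
          = g 0 * form S X + g 1 * form T X + g 2 * form E X + g 3 * form P X
            + g 4 * form R X + g 5 * form S0 X := by
        intro X
        simp only [form_add_left, form_smul_left]
      have h1 : g 0 = 0 := by
        have := congrArg (fun x => form x T) hsum
        simp only [pair, form_zero_left, hT, hST, hET, hPT, hRT, h0T] at this
        have h' : g 0 * s = 0 := by rw [← hs] at this; linarith
        rcases mul_eq_zero.mp h' with h | h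
        · exact h
        · exact absurd h hST
      have h2 : g 1 = 0 := by
        have := congrArg (fun x => form x S) hsum
        simp only [pair, form_zero_left, hS, hTS, hES, hPS, hRS, h0S] at this
        have h' : g 1 * s = 0 := by linarith
        rcases mul_eq_zero.mp h' with h | h
        · exact h
        · exact absurd h hST
      have h3 : g 2 = 0 := by
        have := congrArg (fun x => form x E) hsum
        simp only [pair, form_zero_left, hSE, hTE, hPE, hRE, h0E] at this
        have h' : g 2 * form E E = 0 := by linarith
        rcases mul_eq_zero.mp h' with h | h
        · exact h
        · exact absurd h (ne_of_gt hE)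
      have h4 : g 3 = 0 := by
        have := congrArg (fun x => form x P) hsum
        simp only [pair, form_zero_left, hSP, hTP, hEP, hRP, h0P] at this
        have h' : g 3 * form P P = 0 := by linarith
        rcases mul_eq_zero.mp h' with h | h
        · exact h
        · exact absurd h (ne_of_gt hP)
      have h5 : g 4 = 0 := by
        have := congrArg (fun x => form x R) hsum
        simp only [pair, form_zero_left, hSR, hTR, hER, hPR, h0R] at this
        have h' : g 4 * form R R = 0 := by linarith
        rcases mul_eq_zero.mp h' with h | h
        · exact h
        · exact absurd h (ne_of_gt hRR)
      have h6 : g 5 = 0 := by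
        rw [h1, h2, h3, h4, h5] at hsum
        simp only [zero_smul, zero_add] at hsum
        rcases smul_eq_zero.mp hsum with h | h
        · exact h
        · exact absurd h hS0ne
      intro i
      fin_cases i <;> assumption
    have hspan : Submodule.span ℝ (Set.range v) = ⊤ :=
      hli.span_eq_top_of_card_eq_finrank (by simp [Module.finrank_fin_fun])
    set w : V6 := ![S0 0, S0 1, S0 2, S0 3, -S0 4, -S0 5] with hw
    have hwmem : w ∈ Submodule.span ℝ (Set.range v) := hspan ▸ Submodule.mem_top
    rw [Submodule.mem_span_range_iff_exists_fun] at hwmem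
    obtain ⟨cc, hcc⟩ := hwmem
    have hpos : 0 < form S0 w := form_flip_pos hS0ne
    have : form S0 w = 0 := by
      rw [← hcc]
      have : ∑ i, cc i • v i
          = cc 0 • S + cc 1 • T + cc 2 • E + cc 3 • P + cc 4 • R + cc 5 • S0 := by
        rw [Fin.sum_univ_six]; rfl
      rw [this]
      simp only [form_add_right, form_smul_right, h0S, h0T, h0E, h0P, h0R, h00]
      ring
    rw [this] at hpos
    exact lt_irrefl _ hpos

/-- Product rule / vanishing: if `form (f q) (g q) = 0` on an open set, then at interior
points the "derivative" of the form vanishes in every direction. -/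
lemma form_deriv_eq_zero {U : Set (ℝ × ℝ)} (hU : IsOpen U) {f g : ℝ × ℝ → V6}
    {p : ℝ × ℝ} (hp : p ∈ U) {f' g' : (ℝ × ℝ) →L[ℝ] V6}
    (hf : HasFDerivAt f f' p) (hg : HasFDerivAt g g' p)
    (h0 : ∀ q ∈ U, form (f q) (g q) = 0) (w : ℝ × ℝ) :
    form (f' w) (g p) + form (f p) (g' w) = 0 := by
  set γ : ℝ → ℝ × ℝ := fun s => p + s • w with hγdef
  have hγ0 : γ 0 = p := by simp [hγdef]
  have hγ : HasDerivAt γ w 0 := by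
    have h := ((hasDerivAt_id (0:ℝ)).smul_const w).const_add p
    rw [one_smul] at h
    exact h
  have hF : HasDerivAt (fun s => f (γ s)) (f' w) 0 := by
    have := (hγ0 ▸ hf).comp_hasDerivAt 0 hγ
    exact this
  have hG : HasDerivAt (fun s => g (γ s)) (g' w) 0 := by
    have := (hγ0 ▸ hg).comp_hasDerivAt 0 hγ
    exact this
  have hFi : ∀ i, HasDerivAt (fun s => f (γ s) i) (f' w i) 0 := fun i => hasDerivAt_pi.mp hF i
  have hGi : ∀ i, HasDerivAt (fun s => g (γ s) i) (g' w i) 0 := fun i => hasDerivAt_pi.mp hG i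
  have hprod : HasDerivAt (fun s => form (f (γ s)) (g (γ s)))
      ((f' w 0 * g p 0 + f p 0 * g' w 0) + (f' w 1 * g p 1 + f p 1 * g' w 1)
        + (f' w 2 * g p 2 + f p 2 * g' w 2) + (f' w 3 * g p 3 + f p 3 * g' w 3)
        - (f' w 4 * g p 4 + f p 4 * g' w 4) - (f' w 5 * g p 5 + f p 5 * g' w 5)) 0 := by
    have h01 := ((hFi 0).mul (hGi 0)).add ((hFi 1).mul (hGi 1))
    have h012 := h01.add ((hFi 2).mul (hGi 2))
    have h0123 := h012.add ((hFi 3).mul (hGi 3))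
    have h4 := h0123.sub ((hFi 4).mul (hGi 4))
    have h5 := h4.sub ((hFi 5).mul (hGi 5))
    simp only [hγ0] at h5
    exact h5
  have hev : (fun s => form (f (γ s)) (g (γ s))) =ᶠ[nhds (0:ℝ)] fun _ => 0 := by
    have hmem : γ ⁻¹' U ∈ nhds (0:ℝ) :=
      hγ.continuousAt.preimage_mem_nhds (hU.mem_nhds (hγ0 ▸ hp))
    filter_upwards [hmem] with s hs using h0 _ hs
  have hzero : HasDerivAt (fun s => form (f (γ s)) (g (γ s))) 0 0 :=
    (hasDerivAt_const (0:ℝ) (0:ℝ)).congr_of_eventuallyEq hev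
  have := hprod.unique hzero
  simp only [form]
  linarith [this]

lemma hasFDerivAt_comp_fst {σ : ℝ → V6} {p : ℝ × ℝ} (h : DifferentiableAt ℝ σ p.1) :
    HasFDerivAt (fun q : ℝ × ℝ => σ q.1)
      ((fderiv ℝ σ p.1).comp (ContinuousLinearMap.fst ℝ ℝ ℝ)) p :=
  h.hasFDerivAt.comp p hasFDerivAt_fst

lemma pu_comp_fst {σ : ℝ → V6} {p : ℝ × ℝ} (h : DifferentiableAt ℝ σ p.1) :
    pu (fun q : ℝ × ℝ => σ q.1) p = deriv σ p.1 := by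
  rw [pu, (hasFDerivAt_comp_fst h).fderiv]
  rfl

lemma pv_comp_fst {σ : ℝ → V6} {p : ℝ × ℝ} (h : DifferentiableAt ℝ σ p.1) :
    pv (fun q : ℝ × ℝ => σ q.1) p = 0 := by
  rw [pv, (hasFDerivAt_comp_fst h).fderiv]
  show (fderiv ℝ σ p.1) ((0:ℝ), (1:ℝ)).1 = 0
  simp

/-- The coefficient of the common second curvature direction. -/
def cfun (σ₀ : ℝ × ℝ → V6) (p : ℝ × ℝ) : ℝ :=
  -(form (pu σ₀ p) (pv σ₀ p)) / form (pv σ₀ p) (pv σ₀ p)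

lemma pointwise_all
    (I J : Set ℝ) (hI : IsOpen I) (hJ : IsOpen J)
    (σ τ : ℝ → V6)
    (hσsmooth : ContDiffOn ℝ (⊤ : ℕ∞) σ I) (hτsmooth : ContDiffOn ℝ (⊤ : ℕ∞) τ I)
    (hσ0 : ∀ t ∈ I, σ t ≠ 0) (hτ0 : ∀ t ∈ I, τ t ≠ 0)
    (hσnull : ∀ t ∈ I, form (σ t) (σ t) = 0)
    (hτnull : ∀ t ∈ I, form (τ t) (τ t) = 0)
    (hστ : ∀ t ∈ I, form (σ t) (τ t) ≠ 0)
    (hσreg : ∀ t ∈ I, 0 < form (deriv σ t) (deriv σ t))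
    (hτreg : ∀ t ∈ I, 0 < form (deriv τ t) (deriv τ t))
    (hspan : ∀ t ∈ I,
      Submodule.span ℝ ({σ t, deriv σ t, τ t} : Set V6)
        = Submodule.span ℝ ({τ t, deriv τ t, σ t} : Set V6))
    (σ₀ : ℝ × ℝ → V6)
    (hσ₀smooth : ContDiffOn ℝ (⊤ : ℕ∞) σ₀ (I ×ˢ J))
    (hσ₀0 : ∀ p ∈ I ×ˢ J, σ₀ p ≠ 0)
    (hσ₀null : ∀ p ∈ I ×ˢ J, form (σ₀ p) (σ₀ p) = 0)
    (hσ₀perp : ∀ p ∈ I ×ˢ J,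
      ∀ x ∈ Submodule.span ℝ ({σ p.1, deriv σ p.1, τ p.1} : Set V6),
        form (σ₀ p) x = 0)
    (hσ₀reg : ∀ p ∈ I ×ˢ J, pv σ₀ p ∉ Submodule.span ℝ ({σ₀ p} : Set V6))
    (p : ℝ × ℝ) (hp : p ∈ I ×ˢ J) :
    ((LinearIndependent ℝ ![σ₀ p, σ p.1] ∧
        form (σ₀ p) (σ p.1) = 0 ∧
        LinearIndependent ℝ ![σ₀ p, τ p.1] ∧
        form (σ₀ p) (τ p.1) = 0) ∧
      (form (pu σ₀ p) (σ p.1) = 0 ∧ form (pv σ₀ p) (σ p.1) = 0 ∧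
        form (deriv σ p.1) (σ₀ p) = 0 ∧
        form (pu σ₀ p) (τ p.1) = 0 ∧ form (pv σ₀ p) (τ p.1) = 0 ∧
        form (deriv τ p.1) (σ₀ p) = 0) ∧
      (∀ a b : ℝ, ¬(a = 0 ∧ b = 0) →
        (a • pu (fun q => σ q.1) p + b • pv (fun q => σ q.1) p
            ∉ spanF σ₀ (fun q => σ q.1) p ∨
          a • pu σ₀ p + b • pv σ₀ p ∉ spanF σ₀ (fun q => σ q.1) p)) ∧
      (∀ a b : ℝ, ¬(a = 0 ∧ b = 0) →
        (a • pu (fun q => τ q.1) p + b • pv (fun q => τ q.1) p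
            ∉ spanF σ₀ (fun q => τ q.1) p ∨
          a • pu σ₀ p + b • pv σ₀ p ∉ spanF σ₀ (fun q => τ q.1) p)) ∧
      (pv (fun q => σ q.1) p ∈ spanF σ₀ (fun q => σ q.1) p ∧
        pv σ₀ p ∉ spanF σ₀ (fun q => σ q.1) p ∧
        pv (fun q => τ q.1) p ∈ spanF σ₀ (fun q => τ q.1) p ∧
        pv σ₀ p ∉ spanF σ₀ (fun q => τ q.1) p)) ∧
    (0 < form (pv σ₀ p) (pv σ₀ p)) ∧
    (∃ a b : ℝ, ¬(a = 0 ∧ b = 0) ∧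
      a • (pu (fun q => σ q.1) p + cfun σ₀ p • pv (fun q => σ q.1) p)
          + b • (pu σ₀ p + cfun σ₀ p • pv σ₀ p)
        ∈ spanF σ₀ (fun q => σ q.1) p) ∧
    (∃ a b : ℝ, ¬(a = 0 ∧ b = 0) ∧
      a • (pu (fun q => τ q.1) p + cfun σ₀ p • pv (fun q => τ q.1) p)
          + b • (pu σ₀ p + cfun σ₀ p • pv σ₀ p)
        ∈ spanF σ₀ (fun q => τ q.1) p) := by
  have hU : IsOpen (I ×ˢ J) := hI.prod hJ
  have hpI : p.1 ∈ I := hp.1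
  -- differentiability
  have hσd : DifferentiableAt ℝ σ p.1 :=
    (hσsmooth.contDiffAt (hI.mem_nhds hpI)).differentiableAt (by simp)
  have hτd : DifferentiableAt ℝ τ p.1 :=
    (hτsmooth.contDiffAt (hI.mem_nhds hpI)).differentiableAt (by simp)
  have hdσsm : ContDiffOn ℝ (⊤ : ℕ∞) (deriv σ) I := hσsmooth.deriv_of_isOpen hI (by simp)
  have hdτsm : ContDiffOn ℝ (⊤ : ℕ∞) (deriv τ) I := hτsmooth.deriv_of_isOpen hI (by simp)
  have hdσd : DifferentiableAt ℝ (deriv σ) p.1 :=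
    (hdσsm.contDiffAt (hI.mem_nhds hpI)).differentiableAt (by simp)
  have hdτd : DifferentiableAt ℝ (deriv τ) p.1 :=
    (hdτsm.contDiffAt (hI.mem_nhds hpI)).differentiableAt (by simp)
  have hσ₀d : HasFDerivAt σ₀ (fderiv ℝ σ₀ p) p :=
    ((hσ₀smooth.contDiffAt (hU.mem_nhds hp)).differentiableAt (by simp)).hasFDerivAt
  have hFσ := hasFDerivAt_comp_fst (σ := σ) (p := p) hσd
  have hFτ := hasFDerivAt_comp_fst (σ := τ) (p := p) hτd
  have hFdσ := hasFDerivAt_comp_fst (σ := deriv σ) (p := p) hdσd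
  have hFdτ := hasFDerivAt_comp_fst (σ := deriv τ) (p := p) hdτd
  -- abbreviations
  set S0 : V6 := σ₀ p with hS0def
  set Sp : V6 := σ p.1 with hSpdef
  set Tp : V6 := τ p.1 with hTpdef
  set S' : V6 := deriv σ p.1 with hS'def
  set T' : V6 := deriv τ p.1 with hT'def
  set Pu : V6 := pu σ₀ p with hPudef
  set Pv : V6 := pv σ₀ p with hPvdef
  -- values of the composed derivatives
  have hCσ1 : ((fderiv ℝ σ p.1).comp (ContinuousLinearMap.fst ℝ ℝ ℝ)) ((1:ℝ), (0:ℝ)) = S' := rfl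
  have hCσ2 : ((fderiv ℝ σ p.1).comp (ContinuousLinearMap.fst ℝ ℝ ℝ)) ((0:ℝ), (1:ℝ)) = 0 := by
    show (fderiv ℝ σ p.1) ((0:ℝ), (1:ℝ)).1 = 0; simp
  have hCτ1 : ((fderiv ℝ τ p.1).comp (ContinuousLinearMap.fst ℝ ℝ ℝ)) ((1:ℝ), (0:ℝ)) = T' := rfl
  have hCτ2 : ((fderiv ℝ τ p.1).comp (ContinuousLinearMap.fst ℝ ℝ ℝ)) ((0:ℝ), (1:ℝ)) = 0 := by
    show (fderiv ℝ τ p.1) ((0:ℝ), (1:ℝ)).1 = 0; simp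
  have hCdσ2 : ((fderiv ℝ (deriv σ) p.1).comp (ContinuousLinearMap.fst ℝ ℝ ℝ))
      ((0:ℝ), (1:ℝ)) = 0 := by
    show (fderiv ℝ (deriv σ) p.1) ((0:ℝ), (1:ℝ)).1 = 0; simp
  have hPu1 : (fderiv ℝ σ₀ p) ((1:ℝ), (0:ℝ)) = Pu := rfl
  have hPv1 : (fderiv ℝ σ₀ p) ((0:ℝ), (1:ℝ)) = Pv := rfl
  -- span membership helpers
  have hmemS : ∀ q : ℝ × ℝ, q ∈ I ×ˢ J → (σ q.1 : V6)
      ∈ Submodule.span ℝ ({σ q.1, deriv σ q.1, τ q.1} : Set V6) :=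
    fun q _ => Submodule.subset_span (Set.mem_insert _ _)
  have hmemdS : ∀ q : ℝ × ℝ, q ∈ I ×ˢ J → (deriv σ q.1 : V6)
      ∈ Submodule.span ℝ ({σ q.1, deriv σ q.1, τ q.1} : Set V6) :=
    fun q _ => Submodule.subset_span (Set.mem_insert_of_mem _ (Set.mem_insert _ _))
  have hmemT : ∀ q : ℝ × ℝ, q ∈ I ×ˢ J → (τ q.1 : V6)
      ∈ Submodule.span ℝ ({σ q.1, deriv σ q.1, τ q.1} : Set V6) :=
    fun q _ => Submodule.subset_span
      (Set.mem_insert_of_mem _ (Set.mem_insert_of_mem _ rfl))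
  have hmemdT : ∀ q : ℝ × ℝ, q ∈ I ×ˢ J → (deriv τ q.1 : V6)
      ∈ Submodule.span ℝ ({σ q.1, deriv σ q.1, τ q.1} : Set V6) := by
    intro q hq
    rw [hspan q.1 hq.1]
    exact Submodule.subset_span (Set.mem_insert_of_mem _ (Set.mem_insert _ _))
  -- basic orthogonality from hσ₀perp
  have h0Sp : form S0 Sp = 0 := hσ₀perp p hp _ (hmemS p hp)
  have h0S' : form S0 S' = 0 := hσ₀perp p hp _ (hmemdS p hp)
  have h0Tp : form S0 Tp = 0 := hσ₀perp p hp _ (hmemT p hp)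
  have h0T' : form S0 T' = 0 := hσ₀perp p hp _ (hmemdT p hp)
  have h00 : form S0 S0 = 0 := hσ₀null p hp
  have hSpSp : form Sp Sp = 0 := hσnull p.1 hpI
  have hTpTp : form Tp Tp = 0 := hτnull p.1 hpI
  have hs0 : form Sp Tp ≠ 0 := hστ p.1 hpI
  have hS0ne : S0 ≠ 0 := hσ₀0 p hp
  have hPs : 0 < form S' S' := hσreg p.1 hpI
  have hPt : 0 < form T' T' := hτreg p.1 hpI
  have hPvreg : Pv ∉ Submodule.span ℝ ({S0} : Set V6) := hσ₀reg p hp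
  -- derivative identities via form_deriv_eq_zero
  have hS'Sp : form S' Sp = 0 := by
    have := form_deriv_eq_zero hU hp hFσ hFσ
      (fun q hq => hσnull q.1 hq.1) ((1:ℝ), (0:ℝ))
    rw [hCσ1] at this
    have hc : form Sp S' = form S' Sp := form_comm _ _
    linarith [this, hc]
  have hT'Tp : form T' Tp = 0 := by
    have := form_deriv_eq_zero hU hp hFτ hFτ
      (fun q hq => hτnull q.1 hq.1) ((1:ℝ), (0:ℝ))
    rw [hCτ1] at this
    have hc : form Tp T' = form T' Tp := form_comm _ _
    linarith [this, hc]
  have hPuSp : form Pu Sp = 0 := by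
    have := form_deriv_eq_zero hU hp hσ₀d hFσ
      (fun q hq => hσ₀perp q hq _ (hmemS q hq)) ((1:ℝ), (0:ℝ))
    rw [hCσ1, hPu1] at this
    linarith [this, h0S']
  have hPvSp : form Pv Sp = 0 := by
    have := form_deriv_eq_zero hU hp hσ₀d hFσ
      (fun q hq => hσ₀perp q hq _ (hmemS q hq)) ((0:ℝ), (1:ℝ))
    rw [hCσ2, hPv1, form_zero_right] at this
    linarith [this]
  have hPuTp : form Pu Tp = 0 := by
    have := form_deriv_eq_zero hU hp hσ₀d hFτ
      (fun q hq => hσ₀perp q hq _ (hmemT q hq)) ((1:ℝ), (0:ℝ))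
    rw [hCτ1, hPu1] at this
    linarith [this, h0T']
  have hPvTp : form Pv Tp = 0 := by
    have := form_deriv_eq_zero hU hp hσ₀d hFτ
      (fun q hq => hσ₀perp q hq _ (hmemT q hq)) ((0:ℝ), (1:ℝ))
    rw [hCτ2, hPv1, form_zero_right] at this
    linarith [this]
  have hPuS0 : form Pu S0 = 0 := by
    have := form_deriv_eq_zero hU hp hσ₀d hσ₀d hσ₀null ((1:ℝ), (0:ℝ))
    rw [hPu1] at this
    have hc : form S0 Pu = form Pu S0 := form_comm _ _
    linarith [this, hc]
  have hPvS0 : form Pv S0 = 0 := by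
    have := form_deriv_eq_zero hU hp hσ₀d hσ₀d hσ₀null ((0:ℝ), (1:ℝ))
    rw [hPv1] at this
    have hc : form S0 Pv = form Pv S0 := form_comm _ _
    linarith [this, hc]
  have hPvS' : form Pv S' = 0 := by
    have := form_deriv_eq_zero hU hp hσ₀d hFdσ
      (fun q hq => hσ₀perp q hq _ (hmemdS q hq)) ((0:ℝ), (1:ℝ))
    rw [hCdσ2, hPv1, form_zero_right] at this
    linarith [this]
  -- positivity of the norm of Pv
  have hq : 0 < form Pv Pv :=
    pos_of_orth hSpSp hTpTp hs0 h0Sp h0Tp h00 hPvSp hPvTp hPvS0 hS0ne hPvreg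
  -- commuted versions
  have hSpS' : form Sp S' = 0 := by rw [form_comm]; exact hS'Sp
  have hTpT' : form Tp T' = 0 := by rw [form_comm]; exact hT'Tp
  have hs0' : form Tp Sp ≠ 0 := by rw [form_comm]; exact hs0
  have hTpS' : form Tp S' = form S' Tp := form_comm _ _
  -- span computations
  have hfσ : spanF σ₀ (fun q => σ q.1) p = Submodule.span ℝ ({S0, Sp} : Set V6) := rfl
  have hfτ : spanF σ₀ (fun q => τ q.1) p = Submodule.span ℝ ({S0, Tp} : Set V6) := rfl
  -- non-membership facts
  have hS'not : S' ∉ Submodule.span ℝ ({S0, Sp} : Set V6) := by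
    intro h
    obtain ⟨m, n, hmn⟩ := Submodule.mem_span_pair.mp h
    have := congrArg (fun v => form v S') hmn
    simp only [form_add_left, form_smul_left, h0S', hSpS'] at this
    nlinarith [hPs]
  have hT'not : T' ∉ Submodule.span ℝ ({S0, Tp} : Set V6) := by
    intro h
    obtain ⟨m, n, hmn⟩ := Submodule.mem_span_pair.mp h
    have := congrArg (fun v => form v T') hmn
    simp only [form_add_left, form_smul_left, h0T', hTpT'] at this
    nlinarith [hPt]
  have hPvnotσ : Pv ∉ Submodule.span ℝ ({S0, Sp} : Set V6) := by
    intro h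
    obtain ⟨m, n, hmn⟩ := Submodule.mem_span_pair.mp h
    have hTpair := congrArg (fun v => form v Tp) hmn
    simp only [form_add_left, form_smul_left, h0Tp, hPvTp] at hTpair
    have hn : n = 0 := by
      rcases mul_eq_zero.mp (show n * form Sp Tp = 0 by linarith) with h' | h'
      · exact h'
      · exact absurd h' hs0
    rw [hn, zero_smul, add_zero] at hmn
    exact hPvreg (Submodule.mem_span_singleton.mpr ⟨m, hmn⟩)
  have hPvnotτ : Pv ∉ Submodule.span ℝ ({S0, Tp} : Set V6) := by
    intro h
    obtain ⟨m, n, hmn⟩ := Submodule.mem_span_pair.mp h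
    have hSpair := congrArg (fun v => form v Sp) hmn
    simp only [form_add_left, form_smul_left, h0Sp, hPvSp] at hSpair
    have hn : n = 0 := by
      rcases mul_eq_zero.mp (show n * form Tp Sp = 0 by linarith) with h' | h'
      · exact h'
      · exact absurd h' hs0'
    rw [hn, zero_smul, add_zero] at hmn
    exact hPvreg (Submodule.mem_span_singleton.mpr ⟨m, hmn⟩)
  -- linear independence
  have hindσ : LinearIndependent ℝ ![S0, Sp] := by
    rw [LinearIndependent.pair_iff]
    intro a b hab
    have hTpair := congrArg (fun v => form v Tp) hab
    simp only [form_add_left, form_smul_left, h0Tp, form_zero_left] at hTpair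
    have hb : b = 0 := by
      rcases mul_eq_zero.mp (show b * form Sp Tp = 0 by linarith) with h' | h'
      · exact h'
      · exact absurd h' hs0
    rw [hb, zero_smul, add_zero] at hab
    exact ⟨by simpa [hS0ne] using smul_eq_zero.mp hab, hb⟩
  have hindτ : LinearIndependent ℝ ![S0, Tp] := by
    rw [LinearIndependent.pair_iff]
    intro a b hab
    have hSpair := congrArg (fun v => form v Sp) hab
    simp only [form_add_left, form_smul_left, h0Sp, form_zero_left] at hSpair
    have hb : b = 0 := by
      rcases mul_eq_zero.mp (show b * form Tp Sp = 0 by linarith) with h' | h'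
      · exact h'
      · exact absurd h' hs0'
    rw [hb, zero_smul, add_zero] at hab
    exact ⟨by simpa [hS0ne] using smul_eq_zero.mp hab, hb⟩
  -- helper: scaling out of span
  have hsmul_out : ∀ (W : Submodule ℝ V6) (a : ℝ) (v : V6), a ≠ 0 → a • v ∈ W → v ∈ W := by
    intro W a v ha hmem
    have := W.smul_mem a⁻¹ hmem
    rwa [smul_smul, inv_mul_cancel₀ ha, one_smul] at this
  have hqne : form Pv Pv ≠ 0 := ne_of_gt hq
  have hPsne : form S' S' ≠ 0 := ne_of_gt hPs
  -- the second curvature direction analysis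
  set c : ℝ := cfun σ₀ p with hcdef
  have hcval : c = -(form Pu Pv) / form Pv Pv := rfl
  set E : V6 := S' - (form S' Tp / form Sp Tp) • Sp with hEdef
  set Z : V6 := Pu + c • Pv with hZdef
  have hESp : form E Sp = 0 := by
    simp only [hEdef, form_sub_left, form_smul_left, hS'Sp, hSpSp]; ring
  have hETp : form E Tp = 0 := by
    simp only [hEdef, form_sub_left, form_smul_left]
    field_simp
    ring
  have hEE : form E E = form S' S' := by
    simp only [hEdef, form_sub_left, form_sub_right, form_smul_left, form_smul_right,
      hS'Sp, hSpS', hSpSp]; ring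
  have h0E : form S0 E = 0 := by
    simp only [hEdef, form_sub_right, form_smul_right, h0S', h0Sp]; ring
  have hPvE : form Pv E = 0 := by
    simp only [hEdef, form_sub_right, form_smul_right, hPvS', hPvSp]; ring
  have hZPv : form Z Pv = 0 := by
    simp only [hZdef, form_add_left, form_smul_left, hcval]
    field_simp
    ring
  have hZSp : form Z Sp = 0 := by
    simp only [hZdef, form_add_left, form_smul_left, hPuSp, hPvSp]; ring
  have hZTp : form Z Tp = 0 := by
    simp only [hZdef, form_add_left, form_smul_left, hPuTp, hPvTp]; ring
  have hZS0 : form Z S0 = 0 := by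
    simp only [hZdef, form_add_left, form_smul_left, hPuS0, hPvS0]; ring
  set lam : ℝ := form Z S' / form S' S' with hlamdef
  set R : V6 := Z - lam • E with hRdef
  have hES' : form E S' = form S' S' := by
    simp only [hEdef, form_sub_left, form_smul_left, hSpS']; ring
  have hRS' : form R S' = 0 := by
    simp only [hRdef, form_sub_left, form_smul_left, hES', hlamdef]
    field_simp
    ring
  have hRSp : form R Sp = 0 := by
    simp only [hRdef, form_sub_left, form_smul_left, hZSp, hESp]; ring
  have hRTp : form R Tp = 0 := by
    simp only [hRdef, form_sub_left, form_smul_left, hZTp, hETp]; ring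
  have hPvZ : form Pv Z = 0 := by rw [form_comm]; exact hZPv
  have h0Z : form S0 Z = 0 := by rw [form_comm]; exact hZS0
  have hPvR : form Pv R = 0 := by
    simp only [hRdef, form_sub_right, form_smul_right, hPvZ, hPvE]; ring
  have h0R : form S0 R = 0 := by
    simp only [hRdef, form_sub_right, form_smul_right, h0Z, h0E]; ring
  have hER : form E R = 0 := by
    have hEZ : form E Z = form Z S' := by
      rw [form_comm]
      simp only [hEdef, form_sub_right, form_smul_right, hZSp]; ring
    simp only [hRdef, form_sub_right, form_smul_right, hEZ, hEE, hlamdef]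
    field_simp
    ring
  have hRmem : R ∈ Submodule.span ℝ ({S0} : Set V6) :=
    mem_span_singleton_of_orth hSpSp hTpTp hs0 (by rw [hEE]; exact hPs) hq
      hESp hETp hPvSp hPvTp hRSp hRTp (by rw [form_comm]; exact hPvE) hER hPvR
      h0Sp h0Tp h0E (by rw [form_comm]; exact hPvS0) h0R h00 hS0ne
  obtain ⟨μ, hμ⟩ := Submodule.mem_span_singleton.mp hRmem
  have hZdec : Z = lam • E + μ • S0 := by rw [hμ, hRdef]; module
  -- decomposition of T'
  have hT'mem : T' ∈ Submodule.span ℝ ({Sp, S', Tp} : Set V6) := hmemdT p hp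
  obtain ⟨α, z, hz, hT'eq⟩ := Submodule.mem_span_insert.mp hT'mem
  obtain ⟨β, z', hz', hzeq⟩ := Submodule.mem_span_insert.mp hz
  obtain ⟨γ, hz'eq⟩ := Submodule.mem_span_singleton.mp hz'
  have hT'dec : T' = α • Sp + (β • S' + γ • Tp) := by rw [hT'eq, hzeq, ← hz'eq]
  have hα : α * form Sp Tp + β * form S' Tp = 0 := by
    have h := congrArg (fun v => form v Tp) hT'dec
    simp only [form_add_left, form_smul_left, hTpTp, mul_zero, add_zero, hT'Tp] at h
    linarith
  have hβsq : form T' T' = β ^ 2 * form S' S' := by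
    have h : form T' T' = form (α • Sp + (β • S' + γ • Tp)) (α • Sp + (β • S' + γ • Tp)) := by
      rw [← hT'dec]
    have hTpS'0 : form Tp S' = form S' Tp := form_comm _ _
    have hTpSp : form Tp Sp = form Sp Tp := form_comm _ _
    rw [h]
    simp only [form_add_left, form_add_right, form_smul_left, form_smul_right,
      hSpSp, hSpS', hS'Sp, hTpTp, hTpS'0, hTpSp]
    linear_combination (2 * γ) * hα
  have hβne : β ≠ 0 := by
    intro hβ0
    rw [hβ0] at hβsq
    simp at hβsq
    linarith
  have hα' : α = -(β * form S' Tp) / form Sp Tp := by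
    field_simp
    linarith
  have hT'dec2 : T' = β • E + γ • Tp := by
    rw [hT'dec, hEdef, hα']
    match_scalars <;> (field_simp; try ring)
  refine ⟨⟨⟨hindσ, h0Sp, hindτ, h0Tp⟩,
    ⟨hPuSp, hPvSp, by rw [form_comm]; exact h0S', hPuTp, hPvTp, by rw [form_comm]; exact h0T'⟩,
    ?_, ?_, ?_⟩, hq, ?_, ?_⟩
  · -- immersion for f
    intro a b hab
    rw [pu_comp_fst hσd, pv_comp_fst hσd, smul_zero, add_zero, hfσ]
    by_cases ha : a = 0
    · right
      have hb : b ≠ 0 := fun h => hab ⟨ha, h⟩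
      rw [ha, zero_smul, zero_add]
      exact fun hmem => hPvnotσ (hsmul_out _ b Pv hb hmem)
    · left
      exact fun hmem => hS'not (hsmul_out _ a S' ha hmem)
  · -- immersion for f̂
    intro a b hab
    rw [pu_comp_fst hτd, pv_comp_fst hτd, smul_zero, add_zero, hfτ]
    by_cases ha : a = 0
    · right
      have hb : b ≠ 0 := fun h => hab ⟨ha, h⟩
      rw [ha, zero_smul, zero_add]
      exact fun hmem => hPvnotτ (hsmul_out _ b Pv hb hmem)
    · left
      exact fun hmem => hT'not (hsmul_out _ a T' ha hmem)
  · -- curvature spheres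
    refine ⟨?_, ?_, ?_, ?_⟩
    · rw [pv_comp_fst hσd]; exact Submodule.zero_mem _
    · rw [hfσ]; exact hPvnotσ
    · rw [pv_comp_fst hτd]; exact Submodule.zero_mem _
    · rw [hfτ]; exact hPvnotτ
  · -- second curvature direction for f
    refine ⟨-lam, 1, fun h => one_ne_zero h.2, ?_⟩
    rw [pu_comp_fst hσd, pv_comp_fst hσd, ← hS'def, smul_zero, add_zero, one_smul, hfσ,
      Submodule.mem_span_pair]
    exact ⟨μ, -(lam * (form S' Tp / form Sp Tp)), by
      rw [hZdec, hEdef]; match_scalars <;> (field_simp; try ring)⟩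
  · -- second curvature direction for f̂
    refine ⟨-(lam / β), 1, fun h => one_ne_zero h.2, ?_⟩
    rw [pu_comp_fst hτd, pv_comp_fst hτd, ← hT'def, smul_zero, add_zero, one_smul, hfτ,
      Submodule.mem_span_pair]
    exact ⟨μ, -(lam / β) * γ, by
      rw [hZdec, hT'dec2]; match_scalars <;> (field_simp; try ring)⟩

/-- Theorem 4.2 of the paper (one direction): if two regular sphere curves `σ, σ̂ = τ`
never span a contact element and satisfy `s⁽¹⁾ ⊕ ŝ = ŝ⁽¹⁾ ⊕ s`, then their envelopes
form a Ribaucour pair of channel surfaces with corresponding circular curvature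
directions: `f = span{σ₀,σ}` and `f̂ = span{σ₀,τ}` are Legendre maps enveloping the
common sphere congruence `span{σ₀}`, `σ` and `τ` span curvature spheres with curvature
direction `∂_θ`, and there is a common second curvature direction `X = ∂_t + c∂_θ`. -/
theorem envelopes_of_sphere_curves_are_ribaucour_pair
    (I J : Set ℝ) (hI : IsOpen I) (hJ : IsOpen J)
    (hIconn : I.OrdConnected) (hJconn : J.OrdConnected)
    (σ τ : ℝ → V6)
    (hσsmooth : ContDiffOn ℝ (⊤ : ℕ∞) σ I) (hτsmooth : ContDiffOn ℝ (⊤ : ℕ∞) τ I)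
    (hσ0 : ∀ t ∈ I, σ t ≠ 0) (hτ0 : ∀ t ∈ I, τ t ≠ 0)
    (hσnull : ∀ t ∈ I, form (σ t) (σ t) = 0)
    (hτnull : ∀ t ∈ I, form (τ t) (τ t) = 0)
    (hστ : ∀ t ∈ I, form (σ t) (τ t) ≠ 0)
    (hσreg : ∀ t ∈ I, 0 < form (deriv σ t) (deriv σ t))
    (hτreg : ∀ t ∈ I, 0 < form (deriv τ t) (deriv τ t))
    (hspan : ∀ t ∈ I,
      Submodule.span ℝ ({σ t, deriv σ t, τ t} : Set V6)
        = Submodule.span ℝ ({τ t, deriv τ t, σ t} : Set V6))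
    (σ₀ : ℝ × ℝ → V6)
    (hσ₀smooth : ContDiffOn ℝ (⊤ : ℕ∞) σ₀ (I ×ˢ J))
    (hσ₀0 : ∀ p ∈ I ×ˢ J, σ₀ p ≠ 0)
    (hσ₀null : ∀ p ∈ I ×ˢ J, form (σ₀ p) (σ₀ p) = 0)
    (hσ₀perp : ∀ p ∈ I ×ˢ J,
      ∀ x ∈ Submodule.span ℝ ({σ p.1, deriv σ p.1, τ p.1} : Set V6),
        form (σ₀ p) x = 0)
    (hσ₀reg : ∀ p ∈ I ×ˢ J, pv σ₀ p ∉ Submodule.span ℝ ({σ₀ p} : Set V6)) :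
    (∀ p ∈ I ×ˢ J,
      -- f = span{σ₀,σ} and f̂ = span{σ₀,τ} are totally isotropic 2-planes
      (LinearIndependent ℝ ![σ₀ p, σ p.1] ∧
        form (σ₀ p) (σ p.1) = 0 ∧
        LinearIndependent ℝ ![σ₀ p, τ p.1] ∧
        form (σ₀ p) (τ p.1) = 0) ∧
      -- the contact conditions for f and f̂ hold
      (form (pu σ₀ p) (σ p.1) = 0 ∧ form (pv σ₀ p) (σ p.1) = 0 ∧
        form (deriv σ p.1) (σ₀ p) = 0 ∧
        form (pu σ₀ p) (τ p.1) = 0 ∧ form (pv σ₀ p) (τ p.1) = 0 ∧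
        form (deriv τ p.1) (σ₀ p) = 0) ∧
      -- the immersion conditions for f and f̂ hold
      (∀ a b : ℝ, ¬(a = 0 ∧ b = 0) →
        (a • pu (fun q => σ q.1) p + b • pv (fun q => σ q.1) p
            ∉ spanF σ₀ (fun q => σ q.1) p ∨
          a • pu σ₀ p + b • pv σ₀ p ∉ spanF σ₀ (fun q => σ q.1) p)) ∧
      (∀ a b : ℝ, ¬(a = 0 ∧ b = 0) →
        (a • pu (fun q => τ q.1) p + b • pv (fun q => τ q.1) p
            ∉ spanF σ₀ (fun q => τ q.1) p ∨
          a • pu σ₀ p + b • pv σ₀ p ∉ spanF σ₀ (fun q => τ q.1) p)) ∧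
      -- σ resp. τ span curvature spheres with curvature direction ∂_θ
      (pv (fun q => σ q.1) p ∈ spanF σ₀ (fun q => σ q.1) p ∧
        pv σ₀ p ∉ spanF σ₀ (fun q => σ q.1) p ∧
        pv (fun q => τ q.1) p ∈ spanF σ₀ (fun q => τ q.1) p ∧
        pv σ₀ p ∉ spanF σ₀ (fun q => τ q.1) p)) ∧
    -- common second curvature direction X = ∂_t + c ∂_θ
    (∃ c : ℝ × ℝ → ℝ, ContDiffOn ℝ (⊤ : ℕ∞) c (I ×ˢ J) ∧
      ∀ p ∈ I ×ˢ J,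
        (∃ a b : ℝ, ¬(a = 0 ∧ b = 0) ∧
          a • (pu (fun q => σ q.1) p + c p • pv (fun q => σ q.1) p)
              + b • (pu σ₀ p + c p • pv σ₀ p)
            ∈ spanF σ₀ (fun q => σ q.1) p) ∧
        (∃ a b : ℝ, ¬(a = 0 ∧ b = 0) ∧
          a • (pu (fun q => τ q.1) p + c p • pv (fun q => τ q.1) p)
              + b • (pu σ₀ p + c p • pv σ₀ p)
            ∈ spanF σ₀ (fun q => τ q.1) p)) := by
  have hU : IsOpen (I ×ˢ J) := hI.prod hJ
  have hall := fun p hp => pointwise_all I J hI hJ σ τ hσsmooth hτsmooth hσ0 hτ0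
    hσnull hτnull hστ hσreg hτreg hspan σ₀ hσ₀smooth hσ₀0 hσ₀null hσ₀perp hσ₀reg p hp
  refine ⟨fun p hp => (hall p hp).1,
    ⟨cfun σ₀, ?_, fun p hp => ⟨(hall p hp).2.2.1, (hall p hp).2.2.2⟩⟩⟩
  -- smoothness of the coefficient function
  have hfd : ContDiffOn ℝ (⊤ : ℕ∞) (fun p => fderiv ℝ σ₀ p) (I ×ˢ J) :=
    hσ₀smooth.fderiv_of_isOpen hU (by simp)
  have hpu : ContDiffOn ℝ (⊤ : ℕ∞) (fun p => pu σ₀ p) (I ×ˢ J) := hfd.clm_apply contDiffOn_const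
  have hpv : ContDiffOn ℝ (⊤ : ℕ∞) (fun p => pv σ₀ p) (I ×ˢ J) := hfd.clm_apply contDiffOn_const
  have hcoord : ∀ (F : ℝ × ℝ → V6), ContDiffOn ℝ (⊤ : ℕ∞) F (I ×ˢ J) → ∀ i : Fin 6,
      ContDiffOn ℝ (⊤ : ℕ∞) (fun p => F p i) (I ×ˢ J) := fun F hF i =>
    (ContinuousLinearMap.proj i : V6 →L[ℝ] ℝ).contDiff.comp_contDiffOn hF
  have hform : ∀ (F G : ℝ × ℝ → V6), ContDiffOn ℝ (⊤ : ℕ∞) F (I ×ˢ J) → ContDiffOn ℝ (⊤ : ℕ∞) G (I ×ˢ J) →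
      ContDiffOn ℝ (⊤ : ℕ∞) (fun p => form (F p) (G p)) (I ×ˢ J) := by
    intro F G hF hG
    exact ((((((hcoord F hF 0).mul (hcoord G hG 0)).add
      ((hcoord F hF 1).mul (hcoord G hG 1))).add
      ((hcoord F hF 2).mul (hcoord G hG 2))).add
      ((hcoord F hF 3).mul (hcoord G hG 3))).sub
      ((hcoord F hF 4).mul (hcoord G hG 4))).sub
      ((hcoord F hF 5).mul (hcoord G hG 5))
  exact ((hform _ _ hpu hpv).neg).div (hform _ _ hpv hpv)
    (fun p hp => ne_of_gt (hall p hp).2.1)
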